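/- arXiv:math/9907008 — 2 statements merged into one kernel-verified Lean document; each statement's English description precedes it below -/
import Mathlib

section
/- Let R be the two-sided ideal of T generated by E₁₂, β·E₂₂ and E₂₃. A two-sided ideal I of T satisfies R^N ⊆ I ⊆ R² for some integer N ≥ 2 if and only if there exist integers n ≥ 2 and 1 ≤ n′, n″ ≤ n and a k-subspace V of k[β] with (β^{min(n′,n″)}) ⊆ V such that I = I(n; n′, n″; V). -/
open Polynomial Matrix

noncomputable section

/-- `Algebra` structure on the quotient of a `k`-algebra by a ring congruence. -/
instance RingConQuotient.algebra (k R : Type*) [CommSemiring k] [Ring R] [Algebra k R]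
    (c : RingCon R) : Algebra k c.Quotient where
  algebraMap := (RingCon.mk' c).comp (algebraMap k R)
  commutes' := by
    intro r x
    induction x using Quotient.ind
    exact congrArg _ (Algebra.commutes r _)
  smul_def' := by
    intro r x
    induction x using Quotient.ind
    exact congrArg _ (Algebra.smul_def r _)

variable (k : Type*) [Field k]

/-- `D` is a `k`-derivation (as a linear endomorphism of a `k`-algebra). -/
def IsDer {R : Type*} [Ring R] [Algebra k R] (D : R →ₗ[k] R) : Prop :=
  ∀ x y : R, D (x * y) = D x * y + x * D y

/-- `D` is an inner derivation. -/
def IsInner {R : Type*} [Ring R] [Algebra k R] (D : R →ₗ[k] R) : Prop :=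
  ∃ a : R, ∀ x : R, D x = a * x - x * a

/-- The ideal `(β^j)` of `k[β]`, as a `k`-submodule. -/
def Bsub (j : ℕ) : Submodule k (Polynomial k) where
  carrier := {p | X ^ j ∣ p}
  zero_mem' := dvd_zero _
  add_mem' := fun h1 h2 => dvd_add h1 h2
  smul_mem' := fun c p hp => by
    simpa [Polynomial.smul_eq_C_mul] using Dvd.dvd.mul_left hp (C c)

lemma mem_Bsub {k : Type*} [Field k] {j : ℕ} {p : Polynomial k} :
    p ∈ Bsub k j ↔ X ^ j ∣ p := Iff.rfl

/-- The algebra `T`: upper triangular 3×3 matrices over `k[β]` whose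
`(1,1)` and `(3,3)` entries are constants. -/
def Tsub : Subalgebra k (Matrix (Fin 3) (Fin 3) (Polynomial k)) where
  carrier := {M | (∀ i j : Fin 3, j < i → M i j = 0) ∧
      (∃ x : k, M 0 0 = C x) ∧ (∃ z : k, M 2 2 = C z)}
  zero_mem' := ⟨fun _ _ _ => rfl, ⟨0, by simp⟩, ⟨0, by simp⟩⟩
  one_mem' := ⟨fun i j h => Matrix.one_apply_ne h.ne', ⟨1, by simp⟩, ⟨1, by simp⟩⟩
  add_mem' := by
    rintro a b ⟨hal, ⟨x, hax⟩, ⟨z, haz⟩⟩ ⟨hbl, ⟨y, hby⟩, ⟨w, hbw⟩⟩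
    refine ⟨fun i j h => by simp [hal i j h, hbl i j h], ⟨x + y, by simp [hax, hby]⟩,
      ⟨z + w, by simp [haz, hbw]⟩⟩
  mul_mem' := by
    rintro a b ⟨hal, ⟨x, hax⟩, ⟨z, haz⟩⟩ ⟨hbl, ⟨y, hby⟩, ⟨w, hbw⟩⟩
    refine ⟨fun i j h => ?_, ⟨x * y, ?_⟩, ⟨z * w, ?_⟩⟩
    · rw [Matrix.mul_apply]
      apply Finset.sum_eq_zero
      intro l _
      rcases lt_or_ge l i with hl | hl
      · rw [hal i l hl, zero_mul]
      · rw [hbl l j (lt_of_lt_of_le h hl), mul_zero]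
    · rw [Matrix.mul_apply, Fin.sum_univ_three,
        hbl 1 0 (by decide), hbl 2 0 (by decide), hax, hby]
      simp
    · rw [Matrix.mul_apply, Fin.sum_univ_three,
        hal 2 0 (by decide), hal 2 1 (by decide), haz, hbw]
      simp
  algebraMap_mem' := by
    intro r
    refine ⟨fun i j h => ?_, ⟨r, ?_⟩, ⟨r, ?_⟩⟩
    · rw [Matrix.algebraMap_matrix_apply, if_neg h.ne']
    · rw [Matrix.algebraMap_matrix_apply, if_pos rfl]; rfl
    · rw [Matrix.algebraMap_matrix_apply, if_pos rfl]; rfl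

/-- The matrix `p·E₁₂` as an element of `T`. -/
def tE12 (p : Polynomial k) : Tsub k :=
  ⟨Matrix.single 0 1 p, by
    refine ⟨fun i j h => ?_, ⟨0, ?_⟩, ⟨0, ?_⟩⟩
    · fin_cases i <;> fin_cases j <;> simp_all [Matrix.single, Matrix.of_apply]
    · simp [Matrix.single, Matrix.of_apply]
    · simp [Matrix.single, Matrix.of_apply]⟩

/-- The matrix `p·E₂₂` as an element of `T`. -/
def tE22 (p : Polynomial k) : Tsub k :=
  ⟨Matrix.single 1 1 p, by
    refine ⟨fun i j h => ?_, ⟨0, ?_⟩, ⟨0, ?_⟩⟩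
    · fin_cases i <;> fin_cases j <;> simp_all [Matrix.single, Matrix.of_apply]
    · simp [Matrix.single, Matrix.of_apply]
    · simp [Matrix.single, Matrix.of_apply]⟩

/-- The matrix `p·E₂₃` as an element of `T`. -/
def tE23 (p : Polynomial k) : Tsub k :=
  ⟨Matrix.single 1 2 p, by
    refine ⟨fun i j h => ?_, ⟨0, ?_⟩, ⟨0, ?_⟩⟩
    · fin_cases i <;> fin_cases j <;> simp_all [Matrix.single, Matrix.of_apply]
    · simp [Matrix.single, Matrix.of_apply]
    · simp [Matrix.single, Matrix.of_apply]⟩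

/-- The matrix `p·E₁₃` as an element of `T`. -/
def tE13 (p : Polynomial k) : Tsub k :=
  ⟨Matrix.single 0 2 p, by
    refine ⟨fun i j h => ?_, ⟨0, ?_⟩, ⟨0, ?_⟩⟩
    · fin_cases i <;> fin_cases j <;> simp_all [Matrix.single, Matrix.of_apply]
    · simp [Matrix.single, Matrix.of_apply]
    · simp [Matrix.single, Matrix.of_apply]⟩

/-- The idempotent `E₁₁` as an element of `T`. -/
def tE11 : Tsub k :=
  ⟨Matrix.single 0 0 1, by
    refine ⟨fun i j h => ?_, ⟨1, ?_⟩, ⟨0, ?_⟩⟩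
    · fin_cases i <;> fin_cases j <;> simp_all [Matrix.single, Matrix.of_apply]
    · simp [Matrix.single, Matrix.of_apply]
    · simp [Matrix.single, Matrix.of_apply]⟩

/-- The idempotent `E₂₂` as an element of `T`. -/
def tE22one : Tsub k := tE22 k 1

/-- The idempotent `E₃₃` as an element of `T`. -/
def tE33 : Tsub k :=
  ⟨Matrix.single 2 2 1, by
    refine ⟨fun i j h => ?_, ⟨0, ?_⟩, ⟨1, ?_⟩⟩
    · fin_cases i <;> fin_cases j <;> simp_all [Matrix.single, Matrix.of_apply]
    · simp [Matrix.single, Matrix.of_apply]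
    · simp [Matrix.single, Matrix.of_apply]⟩

/-- The underlying set of the ideal `I(n; n', n''; V)` of `T`. -/
def Icar (n n' n'' : ℕ) (V : Submodule k (Polynomial k)) : Set (Tsub k) :=
  {M | (M : Matrix (Fin 3) (Fin 3) (Polynomial k)) 0 0 = 0 ∧
       (M : Matrix (Fin 3) (Fin 3) (Polynomial k)) 2 2 = 0 ∧
       X ^ n' ∣ (M : Matrix (Fin 3) (Fin 3) (Polynomial k)) 0 1 ∧
       (M : Matrix (Fin 3) (Fin 3) (Polynomial k)) 0 2 ∈ V ∧
       X ^ n ∣ (M : Matrix (Fin 3) (Fin 3) (Polynomial k)) 1 1 ∧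
       X ^ n'' ∣ (M : Matrix (Fin 3) (Fin 3) (Polynomial k)) 1 2}

variable {k}

lemma Tsub_lower {a : Tsub k} :
    ∀ i j : Fin 3, j < i → (a : Matrix (Fin 3) (Fin 3) (Polynomial k)) i j = 0 := a.2.1

lemma Tsub_00 (a : Tsub k) : ∃ x : k, (a : Matrix (Fin 3) (Fin 3) (Polynomial k)) 0 0 = C x :=
  a.2.2.1

lemma Tsub_22 (a : Tsub k) : ∃ z : k, (a : Matrix (Fin 3) (Fin 3) (Polynomial k)) 2 2 = C z :=
  a.2.2.2

variable (k)

/-- The two-sided ideal `I(n; n', n''; V)` of `T`. -/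
def Itsi (n n' n'' : ℕ) (V : Submodule k (Polynomial k)) (hn' : n' ≤ n) (hn'' : n'' ≤ n)
    (hV : ∀ p : Polynomial k, X ^ min n' n'' ∣ p → p ∈ V) : TwoSidedIdeal (Tsub k) :=
  TwoSidedIdeal.mk' (Icar k n n' n'' V)
    (by
      refine ⟨rfl, rfl, ?_, ?_, ?_, ?_⟩ <;> simp)
    (by
      rintro a b ⟨h1, h2, h3, h4, h5, h6⟩ ⟨g1, g2, g3, g4, g5, g6⟩
      refine ⟨?_, ?_, ?_, ?_, ?_, ?_⟩ <;>
        simp only [AddMemClass.coe_add, Matrix.add_apply]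
      · rw [h1, g1, add_zero]
      · rw [h2, g2, add_zero]
      · exact dvd_add h3 g3
      · exact V.add_mem h4 g4
      · exact dvd_add h5 g5
      · exact dvd_add h6 g6)
    (by
      rintro a ⟨h1, h2, h3, h4, h5, h6⟩
      refine ⟨?_, ?_, ?_, ?_, ?_, ?_⟩ <;>
        simp only [NegMemClass.coe_neg, Matrix.neg_apply]
      · rw [h1, neg_zero]
      · rw [h2, neg_zero]
      · exact dvd_neg.mpr h3
      · exact V.neg_mem h4
      · exact dvd_neg.mpr h5
      · exact dvd_neg.mpr h6)
    (by
      rintro t a ⟨h1, h2, h3, h4, h5, h6⟩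
      have hta : ((t * a : Tsub k) : Matrix (Fin 3) (Fin 3) (Polynomial k)) =
          (t : Matrix (Fin 3) (Fin 3) (Polynomial k)) * a := rfl
      obtain ⟨x, hx⟩ := Tsub_00 t
      refine ⟨?_, ?_, ?_, ?_, ?_, ?_⟩ <;>
        rw [hta, Matrix.mul_apply, Fin.sum_univ_three]
      · rw [h1, Tsub_lower (a := a) 1 0 (by decide), Tsub_lower (a := a) 2 0 (by decide)]
        simp
      · rw [h2, Tsub_lower (a := t) 2 0 (by decide), Tsub_lower (a := t) 2 1 (by decide)]
        simp
      · rw [Tsub_lower (a := a) 2 1 (by decide)]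
        simp only [mul_zero, add_zero]
        exact dvd_add (Dvd.dvd.mul_left h3 _)
          (Dvd.dvd.mul_left ((pow_dvd_pow X hn').trans h5) _)
      · rw [h2]
        simp only [mul_zero, add_zero]
        refine V.add_mem ?_
          (hV _ (Dvd.dvd.mul_left ((pow_dvd_pow X (min_le_right n' n'')).trans h6) _))
        rw [hx]
        have : C x * (a : Matrix (Fin 3) (Fin 3) (Polynomial k)) 0 2 =
            x • (a : Matrix (Fin 3) (Fin 3) (Polynomial k)) 0 2 := by
          rw [Polynomial.smul_eq_C_mul]
        rw [this]
        exact V.smul_mem _ h4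
      · rw [Tsub_lower (a := t) 1 0 (by decide), Tsub_lower (a := a) 2 1 (by decide)]
        simp only [zero_mul, mul_zero, zero_add, add_zero]
        exact Dvd.dvd.mul_left h5 _
      · rw [Tsub_lower (a := t) 1 0 (by decide), h2]
        simp only [zero_mul, mul_zero, zero_add, add_zero]
        exact Dvd.dvd.mul_left h6 _)
    (by
      rintro a t ⟨h1, h2, h3, h4, h5, h6⟩
      have hta : ((a * t : Tsub k) : Matrix (Fin 3) (Fin 3) (Polynomial k)) =
          (a : Matrix (Fin 3) (Fin 3) (Polynomial k)) * t := rfl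
      obtain ⟨z, hz⟩ := Tsub_22 t
      refine ⟨?_, ?_, ?_, ?_, ?_, ?_⟩ <;>
        rw [hta, Matrix.mul_apply, Fin.sum_univ_three]
      · rw [h1, Tsub_lower (a := t) 1 0 (by decide), Tsub_lower (a := t) 2 0 (by decide)]
        simp
      · rw [h2, Tsub_lower (a := a) 2 0 (by decide), Tsub_lower (a := a) 2 1 (by decide)]
        simp
      · rw [h1, Tsub_lower (a := t) 2 1 (by decide)]
        simp only [zero_mul, mul_zero, zero_add, add_zero]
        exact Dvd.dvd.mul_right h3 _
      · rw [h1]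
        simp only [zero_mul, zero_add]
        refine V.add_mem
          (hV _ (Dvd.dvd.mul_right ((pow_dvd_pow X (min_le_left n' n'')).trans h3) _)) ?_
        rw [hz]
        have : (a : Matrix (Fin 3) (Fin 3) (Polynomial k)) 0 2 * C z =
            z • (a : Matrix (Fin 3) (Fin 3) (Polynomial k)) 0 2 := by
          rw [Polynomial.smul_eq_C_mul, mul_comm]
        rw [this]
        exact V.smul_mem _ h4
      · rw [Tsub_lower (a := a) 1 0 (by decide), Tsub_lower (a := t) 2 1 (by decide)]
        simp only [zero_mul, mul_zero, zero_add, add_zero]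
        exact Dvd.dvd.mul_right h5 _
      · rw [Tsub_lower (a := a) 1 0 (by decide)]
        simp only [zero_mul, zero_add]
        exact dvd_add (Dvd.dvd.mul_right ((pow_dvd_pow X hn'').trans h5) _)
          (Dvd.dvd.mul_right h6 _))

/-- The quotient algebra `A = T / I(n; n', n''; V)`. -/
def Aquot (n n' n'' : ℕ) (V : Submodule k (Polynomial k)) (hn' : n' ≤ n) (hn'' : n'' ≤ n)
    (hV : ∀ p : Polynomial k, X ^ min n' n'' ∣ p → p ∈ V) : Type _ :=
  (Itsi k n n' n'' V hn' hn'' hV).ringCon.Quotient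

instance (n n' n'' : ℕ) (V : Submodule k (Polynomial k)) (hn' : n' ≤ n) (hn'' : n'' ≤ n)
    (hV : ∀ p : Polynomial k, X ^ min n' n'' ∣ p → p ∈ V) :
    Ring (Aquot k n n' n'' V hn' hn'' hV) :=
  inferInstanceAs (Ring (Itsi k n n' n'' V hn' hn'' hV).ringCon.Quotient)

instance (n n' n'' : ℕ) (V : Submodule k (Polynomial k)) (hn' : n' ≤ n) (hn'' : n'' ≤ n)
    (hV : ∀ p : Polynomial k, X ^ min n' n'' ∣ p → p ∈ V) :
    Algebra k (Aquot k n n' n'' V hn' hn'' hV) :=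
  inferInstanceAs (Algebra k (Itsi k n n' n'' V hn' hn'' hV).ringCon.Quotient)

/-- The quotient map `T → A`. -/
def Amk (n n' n'' : ℕ) (V : Submodule k (Polynomial k)) (hn' : n' ≤ n) (hn'' : n'' ≤ n)
    (hV : ∀ p : Polynomial k, X ^ min n' n'' ∣ p → p ∈ V) :
    Tsub k →+* Aquot k n n' n'' V hn' hn'' hV :=
  RingCon.mk' (Itsi k n n' n'' V hn' hn'' hV).ringCon


/-- Powers of a two-sided ideal of `T`: `J⁰ = ⊤` and `J^{n+1} = span (Jⁿ · J)`. -/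
def tIdealPow (J : TwoSidedIdeal (Tsub k)) : ℕ → TwoSidedIdeal (Tsub k)
  | 0 => ⊤
  | n + 1 => TwoSidedIdeal.span {z : Tsub k | ∃ x ∈ tIdealPow J n, ∃ y ∈ J, z = x * y}

/-!
For `N ≥ 1` the power `R^N` is the ideal `I(N; N-1, N-1; (β^(N-2)))`, so both conditions
`R^N ⊆ I ⊆ R²` are comparisons of exponents. Conversely, if `R^N ⊆ I ⊆ R²`, then `I` has
vanishing diagonal corners, and `a ∈ I` iff each of its four remaining entries, cut out by the
idempotents `E₁₁, E₂₂, E₃₃`, lies in `I` as a single matrix unit. The entry sets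
`{p | p·E₁₂ ∈ I}`, `{p | p·E₂₂ ∈ I}`, `{p | p·E₂₃ ∈ I}` are ideals of the principal ideal
domain `k[β]` containing `β^N`, hence of the form `(β^m)`, and `{p | p·E₁₃ ∈ I}` is the
subspace `V`.
-/

variable {k}

lemma Polynomial.X_pow_dvd_X_pow_iff {R : Type*} [CommRing R] [IsDomain R] {m n : ℕ} :
    (X : R[X]) ^ m ∣ X ^ n ↔ m ≤ n :=
  pow_dvd_pow_iff X_ne_zero not_isUnit_X

lemma Polynomial.exists_mem_iff_X_pow_dvd {S : Ideal k[X]} {N : ℕ} (hN : X ^ N ∈ S) :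
    ∃ n, ∀ p, p ∈ S ↔ X ^ n ∣ p := by
  obtain ⟨g, rfl⟩ := Submodule.IsPrincipal.principal S
  simp only [Ideal.submodule_span_eq, Ideal.mem_span_singleton] at hN ⊢
  obtain ⟨n, -, hg⟩ := (dvd_prime_pow prime_X N).mp hN
  exact ⟨n, fun p => hg.dvd_iff_dvd_left⟩

@[simp] lemma tE12_zero : tE12 k 0 = 0 := Subtype.ext (Matrix.single_zero _ _)
@[simp] lemma tE13_zero : tE13 k 0 = 0 := Subtype.ext (Matrix.single_zero _ _)
@[simp] lemma tE22_zero : tE22 k 0 = 0 := Subtype.ext (Matrix.single_zero _ _)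
@[simp] lemma tE23_zero : tE23 k 0 = 0 := Subtype.ext (Matrix.single_zero _ _)

lemma tE12_add (p q : k[X]) : tE12 k (p + q) = tE12 k p + tE12 k q :=
  Subtype.ext (Matrix.single_add _ _ _ _)

lemma tE13_add (p q : k[X]) : tE13 k (p + q) = tE13 k p + tE13 k q :=
  Subtype.ext (Matrix.single_add _ _ _ _)

lemma tE22_add (p q : k[X]) : tE22 k (p + q) = tE22 k p + tE22 k q :=
  Subtype.ext (Matrix.single_add _ _ _ _)

lemma tE23_add (p q : k[X]) : tE23 k (p + q) = tE23 k p + tE23 k q :=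
  Subtype.ext (Matrix.single_add _ _ _ _)

lemma tE13_smul (c : k) (p : k[X]) : tE13 k (c • p) = c • tE13 k p :=
  Subtype.ext (Matrix.smul_single c 0 2 p).symm

lemma tE12_mul_tE22 (p q : k[X]) : tE12 k p * tE22 k q = tE12 k (p * q) :=
  Subtype.ext (Matrix.single_mul_single_same ..)

lemma tE12_mul_tE23 (p q : k[X]) : tE12 k p * tE23 k q = tE13 k (p * q) :=
  Subtype.ext (Matrix.single_mul_single_same ..)

lemma tE22_mul_tE22 (p q : k[X]) : tE22 k p * tE22 k q = tE22 k (p * q) :=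
  Subtype.ext (Matrix.single_mul_single_same ..)

lemma tE22_mul_tE23 (p q : k[X]) : tE22 k p * tE23 k q = tE23 k (p * q) :=
  Subtype.ext (Matrix.single_mul_single_same ..)

lemma tE11_mul_mul_tE22one (a : Tsub k) : tE11 k * a * tE22one k = tE12 k (a.1 0 1) :=
  Subtype.ext ((Matrix.single_mul_mul_single ..).trans (by rw [one_mul, mul_one]; rfl))

lemma tE11_mul_mul_tE33 (a : Tsub k) : tE11 k * a * tE33 k = tE13 k (a.1 0 2) :=
  Subtype.ext ((Matrix.single_mul_mul_single ..).trans (by rw [one_mul, mul_one]; rfl))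

lemma tE22one_mul_mul_tE22one (a : Tsub k) : tE22one k * a * tE22one k = tE22 k (a.1 1 1) :=
  Subtype.ext ((Matrix.single_mul_mul_single ..).trans (by rw [one_mul, mul_one]; rfl))

lemma tE22one_mul_mul_tE33 (a : Tsub k) : tE22one k * a * tE33 k = tE23 k (a.1 1 2) :=
  Subtype.ext ((Matrix.single_mul_mul_single ..).trans (by rw [one_mul, mul_one]; rfl))

lemma eq_tE_sum_of_corners_eq_zero {a : Tsub k} (h00 : a.1 0 0 = 0) (h22 : a.1 2 2 = 0) :
    a = tE12 k (a.1 0 1) + tE13 k (a.1 0 2) + tE22 k (a.1 1 1) + tE23 k (a.1 1 2) := by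
  have hl := Tsub_lower (a := a)
  ext i j
  fin_cases i <;> fin_cases j <;>
    simp [tE12, tE13, tE22, tE23, Matrix.single, h00, h22,
      hl 1 0 (by decide), hl 2 0 (by decide), hl 2 1 (by decide)]

lemma mul_entries_of_corners_eq_zero {x y : Tsub k} (hx : x.1 0 0 = 0) (hy : y.1 2 2 = 0) :
    (x * y).1 0 0 = 0 ∧ (x * y).1 2 2 = 0 ∧ (x * y).1 0 1 = x.1 0 1 * y.1 1 1 ∧
      (x * y).1 0 2 = x.1 0 1 * y.1 1 2 ∧ (x * y).1 1 1 = x.1 1 1 * y.1 1 1 ∧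
      (x * y).1 1 2 = x.1 1 1 * y.1 1 2 := by
  have hxl := Tsub_lower (a := x)
  have hyl := Tsub_lower (a := y)
  simp [Matrix.mul_apply, Fin.sum_univ_three, hx, hy, hxl 1 0 (by decide),
    hxl 2 0 (by decide), hxl 2 1 (by decide), hyl 1 0 (by decide), hyl 2 0 (by decide),
    hyl 2 1 (by decide)]

section Entries

variable {I : TwoSidedIdeal (Tsub k)} {a : Tsub k}

lemma tE_entries_mem_of_mem (ha : a ∈ I) :
    tE12 k (a.1 0 1) ∈ I ∧ tE13 k (a.1 0 2) ∈ I ∧ tE22 k (a.1 1 1) ∈ I ∧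
      tE23 k (a.1 1 2) ∈ I := by
  rw [← tE11_mul_mul_tE22one, ← tE11_mul_mul_tE33, ← tE22one_mul_mul_tE22one,
    ← tE22one_mul_mul_tE33]
  exact ⟨I.mul_mem_right _ _ (I.mul_mem_left _ _ ha), I.mul_mem_right _ _ (I.mul_mem_left _ _ ha),
    I.mul_mem_right _ _ (I.mul_mem_left _ _ ha), I.mul_mem_right _ _ (I.mul_mem_left _ _ ha)⟩

lemma mem_of_tE_entries_mem (h00 : a.1 0 0 = 0) (h22 : a.1 2 2 = 0)
    (h01 : tE12 k (a.1 0 1) ∈ I) (h02 : tE13 k (a.1 0 2) ∈ I) (h11 : tE22 k (a.1 1 1) ∈ I)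
    (h12 : tE23 k (a.1 1 2) ∈ I) : a ∈ I := by
  rw [eq_tE_sum_of_corners_eq_zero h00 h22]
  exact add_mem (add_mem (add_mem h01 h02) h11) h12

end Entries

section Itsi

variable {n n' n'' : ℕ} {V : Submodule k k[X]} {hn' : n' ≤ n} {hn'' : n'' ≤ n}
  {hV : ∀ p : k[X], X ^ min n' n'' ∣ p → p ∈ V}

lemma mem_Itsi {a : Tsub k} :
    a ∈ Itsi k n n' n'' V hn' hn'' hV ↔
      a.1 0 0 = 0 ∧ a.1 2 2 = 0 ∧ X ^ n' ∣ a.1 0 1 ∧ a.1 0 2 ∈ V ∧ X ^ n ∣ a.1 1 1 ∧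
        X ^ n'' ∣ a.1 1 2 :=
  TwoSidedIdeal.mem_mk' ..

lemma tE12_mem_Itsi {p : k[X]} : tE12 k p ∈ Itsi k n n' n'' V hn' hn'' hV ↔ X ^ n' ∣ p := by
  simp [mem_Itsi, tE12, Matrix.single]

lemma tE13_mem_Itsi {p : k[X]} : tE13 k p ∈ Itsi k n n' n'' V hn' hn'' hV ↔ p ∈ V := by
  simp [mem_Itsi, tE13, Matrix.single]

lemma tE22_mem_Itsi {p : k[X]} : tE22 k p ∈ Itsi k n n' n'' V hn' hn'' hV ↔ X ^ n ∣ p := by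
  simp [mem_Itsi, tE22, Matrix.single]

lemma tE23_mem_Itsi {p : k[X]} : tE23 k p ∈ Itsi k n n' n'' V hn' hn'' hV ↔ X ^ n'' ∣ p := by
  simp [mem_Itsi, tE23, Matrix.single]

lemma Itsi_mono {m m' m'' : ℕ} {W : Submodule k k[X]} {hm' : m' ≤ m} {hm'' : m'' ≤ m}
    {hW : ∀ p : k[X], X ^ min m' m'' ∣ p → p ∈ W}
    (h : m ≤ n) (h' : m' ≤ n') (h'' : m'' ≤ n'') (hVW : V ≤ W) :
    Itsi k n n' n'' V hn' hn'' hV ≤ Itsi k m m' m'' W hm' hm'' hW := by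
  intro a ha
  obtain ⟨h00, h22, h01, h02, h11, h12⟩ := mem_Itsi.mp ha
  exact mem_Itsi.mpr ⟨h00, h22, (pow_dvd_pow X h').trans h01, hVW h02,
    (pow_dvd_pow X h).trans h11, (pow_dvd_pow X h'').trans h12⟩

lemma eq_Itsi_of_tE_mem_iff {I : TwoSidedIdeal (Tsub k)}
    (hcorner : ∀ a ∈ I, a.1 0 0 = 0 ∧ a.1 2 2 = 0)
    (h12 : ∀ p, tE12 k p ∈ I ↔ X ^ n' ∣ p) (h13 : ∀ p, tE13 k p ∈ I ↔ p ∈ V)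
    (h22 : ∀ p, tE22 k p ∈ I ↔ X ^ n ∣ p) (h23 : ∀ p, tE23 k p ∈ I ↔ X ^ n'' ∣ p) :
    I = Itsi k n n' n'' V hn' hn'' hV := by
  ext a
  rw [mem_Itsi, ← h12, ← h13, ← h22, ← h23]
  refine ⟨fun ha => ⟨(hcorner a ha).1, (hcorner a ha).2, tE_entries_mem_of_mem ha⟩, ?_⟩
  rintro ⟨h00, h22, h01, h02, h11, h12⟩
  exact mem_of_tE_entries_mem h00 h22 h01 h02 h11 h12

end Itsi

variable (k) in
def powIdeal (N : ℕ) : TwoSidedIdeal (Tsub k) :=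
  Itsi k N (N - 1) (N - 1) (Bsub k (N - 2)) (Nat.sub_le _ _) (Nat.sub_le _ _)
    (fun _ hp => (pow_dvd_pow X (by omega)).trans hp)

lemma mul_mem_powIdeal_succ {N : ℕ} (hN : 1 ≤ N) {x y : Tsub k} (hx : x ∈ powIdeal k N)
    (hy : y ∈ powIdeal k 1) : x * y ∈ powIdeal k (N + 1) := by
  obtain ⟨hx00, -, hx01, -, hx11, -⟩ := mem_Itsi.mp hx
  obtain ⟨-, hy22, -, -, hy11, -⟩ := mem_Itsi.mp hy
  obtain ⟨h00, h22, h01, h02, h11, h12⟩ := mul_entries_of_corners_eq_zero hx00 hy22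
  have e1 : N + 1 - 1 = N - 1 + 1 := by omega
  have e2 : N + 1 - 2 = N - 1 := by omega
  refine mem_Itsi.mpr ⟨h00, h22, ?_, ?_, ?_, ?_⟩
  · rw [h01, e1, pow_add]
    exact mul_dvd_mul hx01 hy11
  · rw [h02, mem_Bsub, e2]
    exact hx01.mul_right _
  · rw [h11, pow_add]
    exact mul_dvd_mul hx11 hy11
  · rw [h12, Nat.add_sub_cancel]
    exact hx11.mul_right _

lemma powIdeal_succ_le_span {N : ℕ} (hN : 1 ≤ N) :
    powIdeal k (N + 1) ≤
      TwoSidedIdeal.span {z | ∃ x ∈ powIdeal k N, ∃ y ∈ powIdeal k 1, z = x * y} := by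
  intro a ha
  obtain ⟨h00, h22, h01, h02, h11, h12⟩ := mem_Itsi.mp ha
  obtain ⟨q01, hq01⟩ : X ^ (N - 1) * X ∣ a.1 0 1 := by
    rwa [← pow_succ, Nat.sub_add_cancel hN]
  obtain ⟨q02, hq02⟩ : X ^ (N - 1) ∣ a.1 0 2 := by
    rwa [mem_Bsub, show N + 1 - 2 = N - 1 by omega] at h02
  obtain ⟨q11, hq11⟩ : X ^ N * X ∣ a.1 1 1 := by rwa [← pow_succ]
  obtain ⟨q12, hq12⟩ := h12
  have hspan {x y : Tsub k} (hx : x ∈ powIdeal k N) (hy : y ∈ powIdeal k 1) :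
      x * y ∈ TwoSidedIdeal.span {z | ∃ x ∈ powIdeal k N, ∃ y ∈ powIdeal k 1, z = x * y} :=
    TwoSidedIdeal.subset_span ⟨x, hx, y, hy, rfl⟩
  refine mem_of_tE_entries_mem h00 h22 ?_ ?_ ?_ ?_
  · rw [hq01, mul_assoc, ← tE12_mul_tE22]
    exact hspan (tE12_mem_Itsi.mpr dvd_rfl) (tE22_mem_Itsi.mpr (by simp))
  · rw [hq02, ← tE12_mul_tE23]
    exact hspan (tE12_mem_Itsi.mpr dvd_rfl) (tE23_mem_Itsi.mpr (by simp))
  · rw [hq11, mul_assoc, ← tE22_mul_tE22]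
    exact hspan (tE22_mem_Itsi.mpr dvd_rfl) (tE22_mem_Itsi.mpr (by simp))
  · rw [Nat.add_sub_cancel] at hq12
    rw [hq12, ← tE22_mul_tE23]
    exact hspan (tE22_mem_Itsi.mpr dvd_rfl) (tE23_mem_Itsi.mpr (by simp))

lemma span_mul_powIdeal_one {N : ℕ} (hN : 1 ≤ N) :
    TwoSidedIdeal.span {z | ∃ x ∈ powIdeal k N, ∃ y ∈ powIdeal k 1, z = x * y} =
      powIdeal k (N + 1) :=
  le_antisymm
    (TwoSidedIdeal.span_le.mpr fun _ ⟨_, hx, _, hy, hz⟩ => hz ▸ mul_mem_powIdeal_succ hN hx hy)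
    (powIdeal_succ_le_span hN)

lemma span_tE_eq_powIdeal_one :
    TwoSidedIdeal.span {tE12 k 1, tE22 k X, tE23 k 1} = powIdeal k 1 := by
  refine le_antisymm (TwoSidedIdeal.span_le.mpr ?_) fun a ha => ?_
  · rintro x (rfl | rfl | rfl)
    exacts [tE12_mem_Itsi.mpr (by simp), tE22_mem_Itsi.mpr (by simp),
      tE23_mem_Itsi.mpr (by simp)]
  obtain ⟨h00, h22, -, -, ⟨q, hq⟩, -⟩ := mem_Itsi.mp ha
  have hgen {x} (hx : x ∈ ({tE12 k 1, tE22 k X, tE23 k 1} : Set (Tsub k))) :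
      x ∈ TwoSidedIdeal.span {tE12 k 1, tE22 k X, tE23 k 1} :=
    TwoSidedIdeal.subset_span hx
  refine mem_of_tE_entries_mem h00 h22 ?_ ?_ ?_ ?_
  · rw [← one_mul (a.1 0 1), ← tE12_mul_tE22]
    exact TwoSidedIdeal.mul_mem_right _ _ _ (hgen (by simp))
  · rw [← one_mul (a.1 0 2), ← tE12_mul_tE23]
    exact TwoSidedIdeal.mul_mem_right _ _ _ (hgen (by simp))
  · rw [hq, pow_one, ← tE22_mul_tE22]
    exact TwoSidedIdeal.mul_mem_right _ _ _ (hgen (by simp))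
  · rw [← mul_one (a.1 1 2), ← tE22_mul_tE23]
    exact TwoSidedIdeal.mul_mem_left _ _ _ (hgen (by simp))

lemma tIdealPow_one (J : TwoSidedIdeal (Tsub k)) : tIdealPow k J 1 = J :=
  le_antisymm
    (TwoSidedIdeal.span_le.mpr fun _ ⟨_, _, _, hy, hz⟩ => hz ▸ J.mul_mem_left _ _ hy)
    fun a ha => TwoSidedIdeal.subset_span ⟨1, trivial, a, ha, (one_mul a).symm⟩

lemma tIdealPow_span_tE {N : ℕ} (hN : 1 ≤ N) :
    tIdealPow k (TwoSidedIdeal.span {tE12 k 1, tE22 k X, tE23 k 1}) N = powIdeal k N := by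
  induction N, hN using Nat.le_induction with
  | base => rw [tIdealPow_one, span_tE_eq_powIdeal_one]
  | succ N hN ih =>
    change TwoSidedIdeal.span _ = _
    rw [ih, span_tE_eq_powIdeal_one, span_mul_powIdeal_one hN]

section EntryIdeals

variable (I : TwoSidedIdeal (Tsub k))

def entryIdeal12 : Ideal k[X] where
  carrier := {p | tE12 k p ∈ I}
  zero_mem' := by simp
  add_mem' {p q} hp hq := by
    change tE12 k (p + q) ∈ I
    rw [tE12_add]
    exact add_mem hp hq
  smul_mem' c p hp := by
    change tE12 k (c * p) ∈ I
    rw [mul_comm, ← tE12_mul_tE22]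
    exact I.mul_mem_right _ _ hp

def entryIdeal22 : Ideal k[X] where
  carrier := {p | tE22 k p ∈ I}
  zero_mem' := by simp
  add_mem' {p q} hp hq := by
    change tE22 k (p + q) ∈ I
    rw [tE22_add]
    exact add_mem hp hq
  smul_mem' c p hp := by
    change tE22 k (c * p) ∈ I
    rw [← tE22_mul_tE22]
    exact I.mul_mem_left _ _ hp

def entryIdeal23 : Ideal k[X] where
  carrier := {p | tE23 k p ∈ I}
  zero_mem' := by simp
  add_mem' {p q} hp hq := by
    change tE23 k (p + q) ∈ I
    rw [tE23_add]
    exact add_mem hp hq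
  smul_mem' c p hp := by
    change tE23 k (c * p) ∈ I
    rw [← tE22_mul_tE23]
    exact I.mul_mem_left _ _ hp

def entrySpace13 : Submodule k k[X] where
  carrier := {p | tE13 k p ∈ I}
  zero_mem' := by simp
  add_mem' {p q} hp hq := by
    change tE13 k (p + q) ∈ I
    rw [tE13_add]
    exact add_mem hp hq
  smul_mem' c p hp := by
    change tE13 k (c • p) ∈ I
    rw [tE13_smul, Algebra.smul_def]
    exact I.mul_mem_left _ _ hp

end EntryIdeals

lemma tE13_mem_of_X_pow_min_dvd {I : TwoSidedIdeal (Tsub k)} {n' n'' : ℕ}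
    (h12 : tE12 k (X ^ n') ∈ I) (h23 : tE23 k (X ^ n'') ∈ I) {p : k[X]}
    (hp : X ^ min n' n'' ∣ p) : tE13 k p ∈ I := by
  rcases le_total n' n'' with h | h
  · rw [min_eq_left h] at hp
    obtain ⟨q, rfl⟩ := hp
    rw [← tE12_mul_tE23]
    exact I.mul_mem_right _ _ h12
  · rw [min_eq_right h] at hp
    obtain ⟨q, rfl⟩ := hp
    rw [mul_comm, ← tE12_mul_tE23]
    exact I.mul_mem_left _ _ h23

/-- The bounds on the exponents come from `I ⊆ R²` and from multiplying `β^n·E₂₂ ∈ I` by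
`E₁₂` and `E₂₃`. -/
lemma exists_eq_Itsi_of_powIdeal_le {I : TwoSidedIdeal (Tsub k)} {N : ℕ}
    (hlow : powIdeal k N ≤ I) (hupp : I ≤ powIdeal k 2) :
    ∃ (n n' n'' : ℕ) (V : Submodule k k[X])
        (_ : 2 ≤ n) (_ : 1 ≤ n') (_ : 1 ≤ n'') (hn' : n' ≤ n) (hn'' : n'' ≤ n)
        (hV : ∀ p : k[X], X ^ min n' n'' ∣ p → p ∈ V),
        I = Itsi k n n' n'' V hn' hn'' hV := by
  obtain ⟨n, hn⟩ := exists_mem_iff_X_pow_dvd (S := entryIdeal22 I)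
    (hlow (tE22_mem_Itsi.mpr dvd_rfl))
  obtain ⟨n', hn'⟩ := exists_mem_iff_X_pow_dvd (S := entryIdeal12 I)
    (hlow (tE12_mem_Itsi.mpr (pow_dvd_pow X (Nat.sub_le N 1))))
  obtain ⟨n'', hn''⟩ := exists_mem_iff_X_pow_dvd (S := entryIdeal23 I)
    (hlow (tE23_mem_Itsi.mpr (pow_dvd_pow X (Nat.sub_le N 1))))
  have h22 : tE22 k (X ^ n) ∈ I := (hn _).mpr dvd_rfl
  have h12 : tE12 k (X ^ n') ∈ I := (hn' _).mpr dvd_rfl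
  have h23 : tE23 k (X ^ n'') ∈ I := (hn'' _).mpr dvd_rfl
  have two_le : 2 ≤ n := X_pow_dvd_X_pow_iff.mp (tE22_mem_Itsi.mp (hupp h22))
  have one_le' : 1 ≤ n' := X_pow_dvd_X_pow_iff.mp (tE12_mem_Itsi.mp (hupp h12))
  have one_le'' : 1 ≤ n'' := X_pow_dvd_X_pow_iff.mp (tE23_mem_Itsi.mp (hupp h23))
  have le' : n' ≤ n := by
    refine X_pow_dvd_X_pow_iff.mp ((hn' _).mp ?_)
    change tE12 k (X ^ n) ∈ I
    rw [← one_mul (X ^ n), ← tE12_mul_tE22]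
    exact I.mul_mem_left _ _ h22
  have le'' : n'' ≤ n := by
    refine X_pow_dvd_X_pow_iff.mp ((hn'' _).mp ?_)
    change tE23 k (X ^ n) ∈ I
    rw [← mul_one (X ^ n), ← tE22_mul_tE23]
    exact I.mul_mem_right _ _ h22
  have hcorner (a : Tsub k) (ha : a ∈ I) : a.1 0 0 = 0 ∧ a.1 2 2 = 0 :=
    ⟨(mem_Itsi.mp (hupp ha)).1, (mem_Itsi.mp (hupp ha)).2.1⟩
  exact ⟨n, n', n'', entrySpace13 I, two_le, one_le', one_le'', le', le'',
    fun _ => tE13_mem_of_X_pow_min_dvd h12 h23,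
    eq_Itsi_of_tE_mem_iff hcorner hn' (fun _ => Iff.rfl) hn hn''⟩

variable (k)

/-- the admissible ideals of `T`, i.e. the two-sided ideals `I` with
`R^N ⊆ I ⊆ R²` for some `N ≥ 2`, are exactly the ideals `I(n; n', n''; V)`. -/
theorem stmt2 (I : TwoSidedIdeal (Tsub k)) :
    (∃ N : ℕ, 2 ≤ N ∧
        tIdealPow k (TwoSidedIdeal.span {tE12 k 1, tE22 k X, tE23 k 1}) N ≤ I ∧
        I ≤ tIdealPow k (TwoSidedIdeal.span {tE12 k 1, tE22 k X, tE23 k 1}) 2) ↔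
    (∃ (n n' n'' : ℕ) (V : Submodule k (Polynomial k))
        (_ : 2 ≤ n) (_ : 1 ≤ n') (_ : 1 ≤ n'') (hn' : n' ≤ n) (hn'' : n'' ≤ n)
        (hV : ∀ p : Polynomial k, X ^ min n' n'' ∣ p → p ∈ V),
        I = Itsi k n n' n'' V hn' hn'' hV) := by
  constructor
  · rintro ⟨N, hN, hlow, hupp⟩
    rw [tIdealPow_span_tE (by omega : 1 ≤ N)] at hlow
    rw [tIdealPow_span_tE (by norm_num : 1 ≤ 2)] at hupp
    exact exists_eq_Itsi_of_powIdeal_le hlow hupp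
  · rintro ⟨n, n', n'', V, hn, hn1', hn1'', hn', hn'', hV, rfl⟩
    refine ⟨n + 2, by omega, ?_, ?_⟩
    · rw [tIdealPow_span_tE (by omega)]
      have hmin : min n' n'' ≤ n + 2 - 2 := by have := min_le_left n' n''; omega
      exact Itsi_mono (by omega) (by omega) (by omega)
        fun p hp => hV p ((pow_dvd_pow X hmin).trans hp)
    · rw [tIdealPow_span_tE (by norm_num)]
      exact Itsi_mono hn hn1' hn1'' fun p _ => by simp [mem_Bsub]

end
end

section
/- Let m ≥ 1 be an integer and V a k-subspace of k[β] with (β^m) ⊆ V, and set d = dim_k V/(β^m). If d ≤ 2 ≤ m, or if d > 2 and (d − 2)(d + 2 − m) + 2 > 0, then W(V,m) ≠ 0, i.e. there exists a nonzero pair (A,B) ∈ W(V,m). -/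
open Polynomial Matrix

noncomputable section

variable (k : Type*) [Field k]

variable {k}

variable (k)

/-- The space `W(V,m)` of first-order differential operators `A + B·∂/∂β` with
`A(0) = B(0) = 0`, `deg A, deg B ≤ m − 1`, mapping `V` into itself. -/
def Wsub (m : ℕ) (V : Submodule k (Polynomial k)) :
    Submodule k (Polynomial k × Polynomial k) where
  carrier := {P | P.1.coeff 0 = 0 ∧ P.2.coeff 0 = 0 ∧
      P.1.degree ≤ ((m - 1 : ℕ) : WithBot ℕ) ∧ P.2.degree ≤ ((m - 1 : ℕ) : WithBot ℕ) ∧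
      ∀ v ∈ V, P.1 * v + P.2 * derivative v ∈ V}
  zero_mem' := by
    refine ⟨by simp, by simp, by simp, by simp, fun v hv => by simpa using V.zero_mem⟩
  add_mem' := by
    rintro P Q ⟨h1, h2, h3, h4, h5⟩ ⟨g1, g2, g3, g4, g5⟩
    refine ⟨by simp [h1, g1], by simp [h2, g2],
      le_trans (Polynomial.degree_add_le _ _) (max_le h3 g3),
      le_trans (Polynomial.degree_add_le _ _) (max_le h4 g4), fun v hv => ?_⟩
    have : (P + Q).1 * v + (P + Q).2 * derivative v =
        (P.1 * v + P.2 * derivative v) + (Q.1 * v + Q.2 * derivative v) := by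
      simp [add_mul]; ring
    rw [this]
    exact V.add_mem (h5 v hv) (g5 v hv)
  smul_mem' := by
    rintro c P ⟨h1, h2, h3, h4, h5⟩
    refine ⟨by simp [h1], by simp [h2],
      le_trans (Polynomial.degree_smul_le _ _) h3,
      le_trans (Polynomial.degree_smul_le _ _) h4, fun v hv => ?_⟩
    have : (c • P).1 * v + (c • P).2 * derivative v =
        c • (P.1 * v + P.2 * derivative v) := by
      simp [smul_add, smul_mul_assoc]
    rw [this]
    exact V.smul_mem _ (h5 v hv)

/-!
For `q, r` of degree `< m - 1` the operator `v ↦ β q v + β r v'` preserves `(β^m)`, because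
`β · (β^m)' = m β^m`. It therefore induces a map `V/(V ∩ (β^m)) → k[β]/V`, depending linearly
on `(q, r)` and vanishing exactly when `(β q, β r) ∈ W(V,m)`. The pairs `(q, r)` form a space of
dimension `2(m - 1)`, while the maps live in a space of dimension `d (m - d)`. Since
`2(m - 1) - d (m - d) = (d - 2)(d + 2 - m) + 2`, the hypothesis says the first dimension is the
larger one, so some nonzero `(q, r)` induces the zero map.
-/

open Module

section FirstOrderOperator

variable {R : Type*} [CommSemiring R]

def firstOrderOp : R[X] × R[X] →ₗ[R] R[X] →ₗ[R] R[X] :=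
  LinearMap.mk₂ R (fun P v => P.1 * v + P.2 * derivative v)
    (fun P Q v => by simp only [Prod.fst_add, Prod.snd_add]; ring)
    (fun c P v => by simp only [Prod.smul_fst, Prod.smul_snd, smul_mul_assoc, smul_add])
    (fun P v w => by simp only [derivative_add]; ring)
    (fun c P v => by simp only [derivative_smul, mul_smul_comm, smul_add])

@[simp]
lemma firstOrderOp_apply (P : R[X] × R[X]) (v : R[X]) :
    firstOrderOp P v = P.1 * v + P.2 * derivative v :=
  rfl

lemma X_pow_dvd_firstOrderOp {P : R[X] × R[X]} (hP : X ∣ P.2) {m : ℕ} {v : R[X]}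
    (hv : X ^ m ∣ v) : X ^ m ∣ firstOrderOp P v := by
  obtain ⟨A, B⟩ := P
  obtain ⟨b, rfl⟩ := hP
  obtain ⟨t, rfl⟩ := hv
  cases m with
  | zero => simp
  | succ n =>
    refine ⟨A * t + b * C ((n + 1 : ℕ) : R) * t + X * b * derivative t, ?_⟩
    simp only [firstOrderOp_apply, derivative_mul, derivative_X_pow, Nat.add_sub_cancel]
    ring

end FirstOrderOperator

section QuotientDimension

variable {K M : Type*} [DivisionRing K] [AddCommGroup M] [Module K M] {W V : Submodule K M}

lemma Submodule.finiteDimensional_quotient_comap_subtype [FiniteDimensional K (M ⧸ W)] :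
    FiniteDimensional K (V ⧸ W.comap V.subtype) := by
  have e := (W.mkQ ∘ₗ V.subtype).quotKerEquivRange
  rw [LinearMap.ker_comp, Submodule.ker_mkQ] at e
  exact Module.Finite.equiv e.symm

lemma Submodule.finiteDimensional_quotient_of_le [FiniteDimensional K (M ⧸ W)] (h : W ≤ V) :
    FiniteDimensional K (M ⧸ V) :=
  Module.Finite.of_surjective _ (Submodule.factor_surjective h)

lemma Submodule.finrank_quotient_comap_subtype_add_finrank_quotient
    [FiniteDimensional K (M ⧸ W)] (h : W ≤ V) :
    finrank K (V ⧸ W.comap V.subtype) + finrank K (M ⧸ V) = finrank K (M ⧸ W) := by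
  have e := (W.mkQ ∘ₗ V.subtype).quotKerEquivRange
  rw [LinearMap.ker_comp, Submodule.ker_mkQ, LinearMap.range_comp, Submodule.range_subtype] at e
  rw [e.finrank_eq, ← (Submodule.quotientQuotientEquivQuotient W V h).finrank_eq, add_comm]
  exact Submodule.finrank_quotient_add_finrank _

end QuotientDimension

variable {k}

lemma finrank_degreeLT (n : ℕ) : finrank k (degreeLT k n) = n := by
  rw [(degreeLTEquiv k n).finrank_eq, finrank_fin_fun]

lemma Bsub_eq_restrictScalars_span (m : ℕ) :
    Bsub k m = (Ideal.span {(X : k[X]) ^ m}).restrictScalars k :=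
  Submodule.ext fun _ => Ideal.mem_span_singleton.symm

instance finiteDimensional_quotient_Bsub (m : ℕ) : FiniteDimensional k (k[X] ⧸ Bsub k m) := by
  rw [Bsub_eq_restrictScalars_span]
  have := (monic_X_pow (R := k) m).finite_quotient
  exact Module.Finite.equiv (Submodule.Quotient.restrictScalarsEquiv k _).symm

lemma finrank_quotient_Bsub (m : ℕ) : finrank k (k[X] ⧸ Bsub k m) = m := by
  rw [Bsub_eq_restrictScalars_span, (Submodule.Quotient.restrictScalarsEquiv k _).finrank_eq,
    finrank_quotient_span_eq_natDegree, natDegree_X_pow]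

def mulXPair (n : ℕ) : degreeLT k n × degreeLT k n →ₗ[k] k[X] × k[X] :=
  let mulX := LinearMap.mulLeft k (X : k[X]) ∘ₗ (degreeLT k n).subtype
  mulX.prodMap mulX

@[simp]
lemma mulXPair_apply (n : ℕ) (P : degreeLT k n × degreeLT k n) :
    mulXPair n P = (X * (P.1 : k[X]), X * (P.2 : k[X])) :=
  rfl

lemma mulXPair_injective (n : ℕ) : Function.Injective (mulXPair (k := k) n) := by
  rintro ⟨p, q⟩ ⟨p', q'⟩ h
  simp only [mulXPair_apply, Prod.mk.injEq, mul_right_inj' X_ne_zero] at h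
  exact Prod.ext (Subtype.ext h.1) (Subtype.ext h.2)

lemma degree_X_mul_le_of_mem_degreeLT {n : ℕ} {p : k[X]} (hp : p ∈ degreeLT k n) :
    (X * p).degree ≤ (n : WithBot ℕ) := by
  rw [X_mul, degree_mul_X]
  exact Nat.WithBot.add_one_le_of_lt (mem_degreeLT.mp hp)

lemma mulXPair_mem_Wsub {m : ℕ} {V : Submodule k k[X]}
    {P : degreeLT k (m - 1) × degreeLT k (m - 1)}
    (hP : ∀ v ∈ V, firstOrderOp (mulXPair (m - 1) P) v ∈ V) :
    mulXPair (m - 1) P ∈ Wsub k m V :=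
  ⟨coeff_X_mul_zero _, coeff_X_mul_zero _, degree_X_mul_le_of_mem_degreeLT P.1.2,
    degree_X_mul_le_of_mem_degreeLT P.2.2, hP⟩

section Obstruction

variable {m : ℕ} {V : Submodule k k[X]}

lemma firstOrderOp_mulXPair_mem_compatibleMaps (hV : Bsub k m ≤ V) (n : ℕ)
    (P : degreeLT k n × degreeLT k n) :
    firstOrderOp (mulXPair n P) ∘ₗ V.subtype ∈
      Submodule.compatibleMaps ((Bsub k m).comap V.subtype) V :=
  fun _ hv => hV (X_pow_dvd_firstOrderOp (dvd_mul_right _ _) hv)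

def obstruction (hV : Bsub k m ≤ V) (n : ℕ) :
    degreeLT k n × degreeLT k n →ₗ[k] (V ⧸ (Bsub k m).comap V.subtype) →ₗ[k] k[X] ⧸ V :=
  Submodule.mapQLinear _ _ ∘ₗ
    (LinearMap.lcomp k k[X] V.subtype ∘ₗ firstOrderOp ∘ₗ mulXPair n).codRestrict _
      (firstOrderOp_mulXPair_mem_compatibleMaps hV n)

lemma firstOrderOp_mem_of_obstruction_eq_zero {hV : Bsub k m ≤ V} {n : ℕ}
    {P : degreeLT k n × degreeLT k n} (hP : obstruction hV n P = 0) (v : k[X]) (hv : v ∈ V) :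
    firstOrderOp (mulXPair n P) v ∈ V := by
  have := LinearMap.congr_fun hP (Submodule.Quotient.mk ⟨v, hv⟩)
  change Submodule.Quotient.mk (firstOrderOp (mulXPair n P) v) = 0 at this
  rwa [Submodule.Quotient.mk_eq_zero] at this

end Obstruction

lemma mul_sub_lt_two_mul_sub_one {d m : ℕ} (hdm : d ≤ m)
    (h : (d ≤ 2 ∧ 2 ≤ m) ∨ (2 < d ∧ 0 < ((d : ℤ) - 2) * ((d : ℤ) + 2 - m) + 2)) :
    d * (m - d) < 2 * (m - 1) := by
  rcases h with ⟨hd, hm⟩ | ⟨hd, h⟩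
  · interval_cases d <;> omega
  · zify [hdm, (by omega : 1 ≤ m)]
    nlinarith

theorem stmt11_general (m : ℕ) (V : Submodule k (Polynomial k))
    (hV : ∀ p : Polynomial k, X ^ m ∣ p → p ∈ V)
    (d : ℕ) (hd : d = Module.finrank k
      (↥V ⧸ (Submodule.comap V.subtype (Bsub k m))))
    (hcase : (d ≤ 2 ∧ 2 ≤ m) ∨
      (2 < d ∧ 0 < ((d : ℤ) - 2) * ((d : ℤ) + 2 - m) + 2)) :
    ∃ P ∈ Wsub k m V, P ≠ 0 := by
  have hBV : Bsub k m ≤ V := fun p hp => hV p hp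
  have := Submodule.finiteDimensional_quotient_comap_subtype (V := V) (W := Bsub k m)
  have := Submodule.finiteDimensional_quotient_of_le hBV
  have hdim := Submodule.finrank_quotient_comap_subtype_add_finrank_quotient hBV
  rw [finrank_quotient_Bsub, ← hd] at hdim
  have hlt : finrank k ((V ⧸ (Bsub k m).comap V.subtype) →ₗ[k] k[X] ⧸ V) <
      finrank k (degreeLT k (m - 1) × degreeLT k (m - 1)) := by
    rw [finrank_linearMap, finrank_prod, finrank_degreeLT, ← hd,
      (by omega : finrank k (k[X] ⧸ V) = m - d), ← two_mul]
    exact mul_sub_lt_two_mul_sub_one (by omega) hcase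
  obtain ⟨P, hPker, hP0⟩ := Submodule.exists_mem_ne_zero_of_ne_bot
    (LinearMap.ker_ne_bot_of_finrank_lt (f := obstruction hBV (m - 1)) hlt)
  exact ⟨mulXPair (m - 1) P, mulXPair_mem_Wsub (firstOrderOp_mem_of_obstruction_eq_zero hPker),
    (map_ne_zero_iff _ (mulXPair_injective _)).mpr hP0⟩

/-- if `d ≤ 2 ≤ m`, or `d > 2` and `(d−2)(d+2−m) + 2 > 0`,
then `W(V,m) ≠ 0`. -/
theorem stmt11 (m : ℕ) (hm : 1 ≤ m) (V : Submodule k (Polynomial k))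
    (hV : ∀ p : Polynomial k, X ^ m ∣ p → p ∈ V)
    (d : ℕ) (hd : d = Module.finrank k
      (↥V ⧸ (Submodule.comap V.subtype (Bsub k m))))
    (hcase : (d ≤ 2 ∧ 2 ≤ m) ∨
      (2 < d ∧ 0 < ((d : ℤ) - 2) * ((d : ℤ) + 2 - m) + 2)) :
    ∃ P ∈ Wsub k m V, P ≠ 0 :=
  stmt11_general m V hV d hd hcase

end
end
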